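/- arXiv:1310.7116 — 6 statements merged into one kernel-verified Lean document; each statement's English description precedes it below -/
import Mathlib

section
/- In a well-ordered set, for elements x < y, the α-th condensation classes of x and y coincide if and only if the order type of the interval [x, y) is strictly less than ω^α. -/
/-!
Write `d x y` for the order type of `[x, y)`. It is additive along `x ≤ y ≤ z`, and every ordinal
`o ≤ d x y` is attained as `d x z` for some `z ∈ [x, y]`. Induct on `α`, the successor step being
the only real one: if `E α` relates `u ≤ v` exactly when `d u v < c`, then `[x, y]` meets finitely
many `E α`-classes iff `d x y < c * ω`. Indeed, the points at distance `c * n` from `x` lie in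
pairwise distinct classes, while `w ↦ d x w / c` takes finitely many values on `[x, y]` and points
with the same value are at distance `< c`.
-/

open Ordinal Set

theorem Ordinal.div_lt_add_div_of_le {a b c : Ordinal} (hc : c ≠ 0) (hcb : c ≤ b) :
    a / c < (a + b) / c := by
  rw [lt_div hc, mul_succ]
  exact add_le_add (mul_div_le a c) hcb

section WellOrder

variable {L : Type*} [LinearOrder L] [WellFoundedLT L] {x y z : L}

def sumLexIioIcoRelIso (hxy : x ≤ y) :
    Sum.Lex ((· < ·) : Iio x → Iio x → Prop) ((· < ·) : Ico x y → Ico x y → Prop) ≃r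
      ((· < ·) : Iio y → Iio y → Prop) where
  toFun := Sum.elim (fun a => ⟨a, a.2.trans_le hxy⟩) (fun a => ⟨a, a.2.2⟩)
  invFun a := if h : a.1 < x then .inl ⟨a, h⟩ else .inr ⟨a, not_lt.1 h, a.2⟩
  left_inv := by
    rintro (⟨a, ha⟩ | ⟨a, ha⟩)
    · simp [mem_Iio.1 ha]
    · simp [not_lt.2 ha.1]
  right_inv a := by
    by_cases h : a.1 < x <;> simp [h]
  map_rel_iff' {a b} := by
    rcases a with a | a <;> rcases b with b | b
    · rw [Sum.lex_inl_inl]; rfl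
    · exact iff_of_true (show a.1 < b.1 from a.2.trans_le b.2.1) (Sum.Lex.sep _ _)
    · exact iff_of_false (show ¬ a.1 < b.1 from (b.2.trans_le a.2.1).not_gt) Sum.lex_inr_inl
    · rw [Sum.lex_inr_inr]; rfl

namespace Ordinal

theorem typein_add_type_Ico (hxy : x ≤ y) :
    typein (α := L) (· < ·) x + typeLT (Ico x y) = typein (α := L) (· < ·) y :=
  (sumLexIioIcoRelIso hxy).ordinalType_congr

theorem type_Ico_add_type_Ico (hxy : x ≤ y) (hyz : y ≤ z) :
    typeLT (Ico x y) + typeLT (Ico y z) = typeLT (Ico x z) := by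
  rw [← add_right_inj (typein (α := L) (· < ·) x), ← add_assoc, typein_add_type_Ico hxy,
    typein_add_type_Ico hyz, typein_add_type_Ico (hxy.trans hyz)]

theorem type_Ico_eq_zero_iff : typeLT (Ico x y) = 0 ↔ y ≤ x := by
  rw [type_eq_zero_iff_isEmpty, isEmpty_coe_sort, Ico_eq_empty_iff, not_lt]

theorem type_Ico_lt_type_Ico_iff (hxy : x ≤ y) (hxz : x ≤ z) :
    typeLT (Ico x y) < typeLT (Ico x z) ↔ y < z := by
  rw [← add_lt_add_iff_left (typein (α := L) (· < ·) x), typein_add_type_Ico hxy,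
    typein_add_type_Ico hxz, typein_lt_typein]

theorem exists_type_Ico_eq {o : Ordinal} (hxy : x ≤ y) (ho : o ≤ typeLT (Ico x y)) :
    ∃ z ∈ Icc x y, typeLT (Ico x z) = o := by
  rcases ho.eq_or_lt with rfl | ho
  · exact ⟨y, ⟨hxy, le_rfl⟩, rfl⟩
  have hlt : typein (α := L) (· < ·) x + o < typein (α := L) (· < ·) y := by
    rwa [← typein_add_type_Ico hxy, add_lt_add_iff_left]
  obtain ⟨z, hz⟩ := typein_surj (α := L) (· < ·) (hlt.trans (typein_lt_type (α := L) _ y))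
  have hxz : x ≤ z := by
    rw [← not_lt, ← typein_lt_typein (α := L) (· < ·), hz]
    exact not_lt.2 le_self_add
  refine ⟨z, ⟨hxz, ?_⟩, ?_⟩
  · exact ((typein_lt_typein (α := L) (· < ·)).1 (hz ▸ hlt)).le
  · rw [← add_right_inj (typein (α := L) (· < ·) x), typein_add_type_Ico hxz, hz]

end Ordinal

end WellOrder

section Condensation

variable {L : Type*} [LinearOrder L] [WellFoundedLT L] {r : L → L → Prop} {o : Ordinal} {x y : L}

theorem infinite_image_quot_Icc (hr : Equivalence r)
    (hro : ∀ u v, u ≤ v → r u v → typeLT (Ico u v) < o) (hxy : x ≤ y)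
    (h : o * ω ≤ typeLT (Ico x y)) : (Quot.mk r '' Icc x y).Infinite := by
  choose z hz hxz using fun n : ℕ =>
    exists_type_Ico_eq (o := o * n) hxy ((mul_le_mul_right (natCast_lt_omega0 n).le o).trans h)
  refine infinite_of_injective_forall_mem (f := fun n => Quot.mk r (z n))
    (.of_lt_imp_ne fun n m hnm heq => ?_) fun n => mem_image_of_mem _ (hz n)
  have hle : z n ≤ z m := by
    rw [← not_lt, ← type_Ico_lt_type_Ico_iff (hz m).1 (hz n).1, hxz, hxz, not_lt]
    exact mul_le_mul_right (by exact_mod_cast hnm.le) o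
  have hclose := hro _ _ hle (hr.eqvGen_iff.1 (Quot.eq.1 heq))
  have : o * m < o * (n + 1) := calc
    o * m = o * n + typeLT (Ico (z n) (z m)) := by
      rw [← hxz, ← hxz, type_Ico_add_type_Ico (hz n).1 hle]
    _ < o * n + o := (add_lt_add_iff_left _).2 hclose
    _ = o * (n + 1) := (mul_add_one _ _).symm
  exact this.not_ge (mul_le_mul_right (by exact_mod_cast hnm) o)

theorem finite_image_quot_Icc (hro : ∀ u v, u ≤ v → typeLT (Ico u v) < o → r u v)
    (h : typeLT (Ico x y) < o * ω) : (Quot.mk r '' Icc x y).Finite := by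
  have ho : o ≠ 0 := by rintro rfl; simp at h
  obtain ⟨n, hn, hlt⟩ := (lt_mul_iff_of_isSuccLimit isSuccLimit_omega0).1 h
  obtain ⟨k, rfl⟩ := lt_omega0.1 hn
  set f : L → Ordinal := fun w => (typeLT (Ico x w)) / o
  have hf : MapsTo f (Icc x y) (Iio k) := fun w hw =>
    (lt_mul_iff_div_lt ho).1 ((type_Ico_add_type_Ico hw.1 hw.2 ▸ le_self_add).trans_lt hlt)
  have hfibre : ∀ u ∈ Icc x y, ∀ v ∈ Icc x y, f u = f v → Quot.mk r u = Quot.mk r v := by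
    intro u hu v hv huv
    wlog hle : u ≤ v generalizing u v
    · exact (this v hv u hu huv.symm (le_of_not_ge hle)).symm
    refine Quot.sound (hro u v hle (not_le.1 fun hov => ?_))
    have := div_lt_add_div_of_le (a := (typeLT (Ico x u))) ho hov
    rw [type_Ico_add_type_Ico hu.1 hle] at this
    exact this.ne huv
  have hfin : (f '' Icc x y).Finite :=
    ((finite_Iio k).image _ |>.subset (natCast_image_Iio k ▸ hf.image_subset))
  have : Nonempty L := ⟨x⟩
  refine (hfin.image fun i => Quot.mk r (Function.invFunOn f (Icc x y) i)).subset ?_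
  rintro _ ⟨w, hw, rfl⟩
  exact ⟨f w, mem_image_of_mem f hw, hfibre _ (Function.invFunOn_mem ⟨w, hw, rfl⟩) _ hw
    (Function.invFunOn_eq ⟨w, hw, rfl⟩)⟩

theorem finite_image_quot_Icc_iff (hr : Equivalence r)
    (hro : ∀ u v, u ≤ v → (r u v ↔ typeLT (Ico u v) < o)) (hxy : x ≤ y) :
    (Quot.mk r '' Icc x y).Finite ↔ typeLT (Ico x y) < o * ω :=
  ⟨fun hfin => not_le.1 fun h =>
      infinite_image_quot_Icc hr (fun u v huv => (hro u v huv).1) hxy h hfin,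
    finite_image_quot_Icc fun u v huv => (hro u v huv).2⟩

end Condensation

open Ordinal in
/-- Rosenstein, Prop. 5.7. Let `L` be a well-ordered set and
let `E α` be the `α`-th condensation equivalence: `E 0` is equality,
`E (α+1) x y` holds iff there are only finitely many `E α`-classes in the
interval between `x` and `y` (so `E 1 x y` iff that interval is finite),
and at limits `E γ = ⋃_{α<γ} E α`.  Then for `x < y`, the `α`-th condensation
classes of `x` and `y` coincide iff the order type of `[x, y)` is `< ω^α`. -/
theorem stmt4 {L : Type} [LinearOrder L] [WellFoundedLT L]
    (E : Ordinal → L → L → Prop)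
    (hequiv : ∀ α, Equivalence (E α))
    (h0 : ∀ x y, E 0 x y ↔ x = y)
    (hsucc : ∀ α x y, E (α + 1) x y ↔
      ((Set.Icc (min x y) (max x y)).image (Quot.mk (E α))).Finite)
    (hlim : ∀ γ, Order.IsSuccLimit γ → ∀ x y, E γ x y ↔ ∃ α < γ, E α x y) :
    ∀ (α : Ordinal) (x y : L), x < y →
      (E α x y ↔ Ordinal.type (Subrel ((· < ·) : L → L → Prop) (· ∈ Set.Ico x y)) < omega0 ^ α) := by
  suffices key : ∀ α (x y : L), x ≤ y → (E α x y ↔ typeLT (Ico x y) < ω ^ α) from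
    fun α x y hxy => key α x y hxy.le
  intro α
  induction α using Ordinal.limitRecOn with
  | zero =>
    intro x y hxy
    rw [h0, opow_zero, Order.lt_one_iff, type_Ico_eq_zero_iff]
    exact ⟨fun h => h ▸ le_rfl, hxy.antisymm⟩
  | add_one α ih =>
    intro x y hxy
    rw [hsucc, min_eq_left hxy, max_eq_right hxy, opow_add_one,
      finite_image_quot_Icc_iff (hequiv α) ih hxy]
  | limit γ hγ ih =>
    intro x y hxy
    rw [hlim γ hγ, lt_opow_of_isSuccLimit omega0_ne_zero hγ]
    exact exists_congr fun β => and_congr_right fun hβ => ih β hβ x y hxy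
end

section
/- If a countable structure M has an AZ-enumeration, then M is ω-categorical. -/
open FirstOrder Cardinal

/-!
If `M` realized infinitely many `n`-types, picking tuples of pairwise distinct types would give a
sequence of which no two terms are related by an elementary self-map, contradicting the
AZ-property. So `M` has only finitely many `n`-types for every `n`; each of them is then isolated
by a single formula (the conjunction of formulas separating it from the other types), and this is
what lets finite partial elementary maps between `M` and any model `N` of its theory be extended
forth and back. Running the back-and-forth along enumerations of `M` and of a countable model
`N` of `Th(M)` then yields an isomorphism `M ≃ N`.
-/

namespace FirstOrder.Language

open Set

variable {L : Language} {M N : Type*} [L.Structure M] [L.Structure N] {α β γ : Type*}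

variable (L) in
def tp (v : α → M) : Set (L.Formula α) :=
  {φ | φ.Realize v}

@[simp]
theorem mem_tp {v : α → M} {φ : L.Formula α} : φ ∈ tp L v ↔ φ.Realize v :=
  Iff.rfl

theorem tp_comp (v : α → M) (g : β → α) : tp L (v ∘ g) = Formula.relabel g ⁻¹' tp L v := by
  ext φ
  simp [Formula.realize_relabel]

theorem tp_comp_eq {v : α → M} {w : α → N} (h : tp L v = tp L w) (g : β → α) :
    tp L (v ∘ g) = tp L (w ∘ g) := by
  rw [tp_comp, tp_comp, h]

theorem ElementaryEmbedding.tp_comp (f : M ↪ₑ[L] N) (v : α → M) : tp L (f ∘ v) = tp L v :=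
  Set.ext fun φ => f.map_formula φ v

theorem finite_range_tp_of_exists_elementaryEmbedding
    (h : ∀ b : ℕ → α → M, ∃ i j, i ≠ j ∧ ∃ f : M ↪ₑ[L] M, f ∘ b i = b j) :
    (range (tp L (M := M) (α := α))).Finite := by
  by_contra hinf
  let g := Set.Infinite.natEmbedding _ hinf
  choose b hb using fun k => (g k).2
  obtain ⟨i, j, hij, f, hf⟩ := h b
  refine hij (g.injective (Subtype.ext ?_))
  rw [← hb i, ← hb j, ← hf, f.tp_comp]

theorem tp_eq_of_subset {v : α → M} {w : α → N} (h : tp L v ⊆ tp L w) : tp L v = tp L w := by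
  refine h.antisymm fun φ hφ => ?_
  by_contra hv
  exact Formula.realize_not.1 (h (Formula.realize_not.2 hv)) hφ

theorem finite_range_tp (hM : ∀ n, (range (tp L (M := M) (α := Fin n))).Finite) [Finite α] :
    (range (tp L (M := M) (α := α))).Finite := by
  obtain ⟨n, ⟨e⟩⟩ := Finite.exists_equiv_fin α
  refine ((hM n).image (Formula.relabel e ⁻¹' ·)).subset ?_
  rintro _ ⟨v, rfl⟩
  refine ⟨tp L (v ∘ e.symm), mem_range_self _, ?_⟩
  change Formula.relabel e ⁻¹' tp L (v ∘ e.symm) = tp L v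
  rw [← tp_comp, Function.comp_assoc, e.symm_comp_self, Function.comp_id]

theorem exists_isolating (hM : (range (tp L (M := M) (α := α))).Finite) (v : α → M) :
    ∃ θ : L.Formula α, θ.Realize v ∧ ∀ w : α → M, θ.Realize w → tp L w = tp L v := by
  classical
  have := hM.to_subtype
  let separating (p : range (tp L (M := M) (α := α))) : L.Formula α :=
    if h : ∃ φ ∈ tp L v, φ ∉ (p : Set (L.Formula α)) then h.choose else ⊤
  refine ⟨Formula.iInf separating, ?_, fun w hw => ?_⟩
  · simp only [Formula.realize_iInf]
    intro p
    unfold separating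
    split_ifs with h
    · exact h.choose_spec.1
    · exact (Formula.realize_top (L := L)).2 trivial
  · by_contra hne
    have h : ∃ φ ∈ tp L v, φ ∉ tp L w := by
      by_contra! h'
      exact hne (tp_eq_of_subset h').symm
    have hsep := Formula.realize_iInf.1 hw ⟨tp L w, mem_range_self w⟩
    simp only [separating, dif_pos h] at hsep
    exact h.choose_spec.2 hsep

theorem tp_sumElim_eq_of_realize [Finite γ] {a : β → M} {b : β → N} (hab : tp L a = tp L b)
    {v : γ → M} {θ : L.Formula (β ⊕ γ)}
    (hθ : ∀ u : γ → M, θ.Realize (Sum.elim a u) → tp L (Sum.elim a u) = tp L (Sum.elim a v))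
    {w : γ → N} (hw : θ.Realize (Sum.elim b w)) : tp L (Sum.elim a v) = tp L (Sum.elim b w) := by
  refine tp_eq_of_subset fun χ hχ => ?_
  have hall : (θ.imp χ).iAlls γ ∈ tp L a := by
    simp only [mem_tp, Formula.realize_iAlls, Formula.realize_imp]
    intro u hu
    rw [← mem_tp, hθ u hu]
    exact hχ
  rw [hab, mem_tp, Formula.realize_iAlls] at hall
  exact Formula.realize_imp.1 (hall w) hw

theorem exists_tp_sumElim_eq_right [Finite γ]
    (hM : (range (tp L (M := M) (α := β ⊕ γ))).Finite) {a : β → M} {b : β → N}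
    (hab : tp L a = tp L b) (v : γ → M) :
    ∃ w : γ → N, tp L (Sum.elim a v) = tp L (Sum.elim b w) := by
  obtain ⟨θ, hθv, hθ⟩ := exists_isolating hM (Sum.elim a v)
  have hex : θ.iExs γ ∈ tp L a := Formula.realize_iExs.2 ⟨v, hθv⟩
  rw [hab] at hex
  obtain ⟨w, hw⟩ := Formula.realize_iExs.1 hex
  exact ⟨w, tp_sumElim_eq_of_realize hab (fun u hu => hθ _ hu) hw⟩

theorem exists_tp_sumElim_eq_left [Finite γ]
    (hM : (range (tp L (M := M) (α := β ⊕ γ))).Finite) {a : β → M} {b : β → N}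
    (hab : tp L a = tp L b) (w : γ → N) :
    ∃ v : γ → M, tp L (Sum.elim a v) = tp L (Sum.elim b w) := by
  have := hM.to_subtype
  choose rep hrep using fun p : range (tp L (M := M) (α := β ⊕ γ)) => p.2
  choose θ hθrep hθ using fun p => exists_isolating hM (rep p)
  -- every tuple of `M`, hence of `N`, satisfies one of the finitely many isolating formulas
  have hall : (Formula.iSup θ).iAlls γ ∈ tp L a := by
    simp only [mem_tp, Formula.realize_iAlls, Formula.realize_iSup]
    intro u
    let p : range (tp L (M := M) (α := β ⊕ γ)) := ⟨_, mem_range_self (Sum.elim a u)⟩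
    have hp := hθrep p
    rw [← mem_tp, hrep p] at hp
    exact ⟨p, hp⟩
  rw [hab, mem_tp, Formula.realize_iAlls] at hall
  obtain ⟨p, hp⟩ := Formula.realize_iSup.1 (hall w)
  have hex : (θ p).iExs γ ∈ tp L b := Formula.realize_iExs.2 ⟨w, hp⟩
  rw [← hab] at hex
  obtain ⟨v, hv⟩ := Formula.realize_iExs.1 hex
  exact ⟨v, tp_sumElim_eq_of_realize hab (fun u hu => (hθ p _ hu).trans (hθ p _ hv).symm) hp⟩

variable (L) in
def IsPartialElementary (s : Set (M × N)) : Prop :=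
  tp L (fun p : s => p.1.1) = tp L (fun p : s => p.1.2)

theorem IsPartialElementary.tp_eq {s : Set (M × N)} (hs : IsPartialElementary L s)
    {x : α → M} {y : α → N} (hxy : ∀ i, (x i, y i) ∈ s) : tp L x = tp L y :=
  tp_comp_eq hs fun i => ⟨(x i, y i), hxy i⟩

theorem IsPartialElementary.mono {s t : Set (M × N)} (hs : IsPartialElementary L s) (hts : t ⊆ s) :
    IsPartialElementary L t :=
  hs.tp_eq fun p => hts p.2

theorem isPartialElementary_range {x : α → M} {y : α → N} (h : tp L x = tp L y) :
    IsPartialElementary L (range fun i => (x i, y i)) := by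
  choose g hg using fun p : range (fun i => (x i, y i)) => p.2
  have hx : (fun p : range (fun i => (x i, y i)) => p.1.1) = x ∘ g :=
    funext fun p => (congrArg Prod.fst (hg p)).symm
  have hy : (fun p : range (fun i => (x i, y i)) => p.1.2) = y ∘ g :=
    funext fun p => (congrArg Prod.snd (hg p)).symm
  rw [IsPartialElementary, hx, hy]
  exact tp_comp_eq h g

theorem isPartialElementary_empty (h : M ≅[L] N) : IsPartialElementary L (∅ : Set (M × N)) := by
  have h₀ : tp L (default : Empty → M) = tp L (default : Empty → N) :=
    Set.ext (h.realize_sentence ·)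
  rw [IsPartialElementary]
  convert tp_comp_eq h₀ (isEmptyElim : (∅ : Set (M × N)) → Empty) using 2 <;>
    exact funext isEmptyElim

theorem insert_subset_range_sumElim (s : Set (M × N)) (m : M) (n : N) :
    insert (m, n) s ⊆ range fun i : s ⊕ Unit =>
      (Sum.elim (fun p => p.1.1) (fun _ => m) i, Sum.elim (fun p => p.1.2) (fun _ => n) i) := by
  rintro p (rfl | hp)
  · exact ⟨Sum.inr (), rfl⟩
  · exact ⟨Sum.inl ⟨p, hp⟩, rfl⟩

theorem tp_eq_of_forall_mem_iUnion [Finite α] {s : ℕ → Set (M × N)} (hs : Monotone s)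
    (h : ∀ k, IsPartialElementary L (s k)) {x : α → M} {y : α → N}
    (hxy : ∀ i, (x i, y i) ∈ ⋃ k, s k) : tp L x = tp L y := by
  choose k hk using fun i => mem_iUnion.1 (hxy i)
  obtain ⟨K, hK⟩ := Finite.exists_le k
  exact (h K).tp_eq fun i => hs (hK i) (hk i)

theorem nonempty_equiv_of_forall_tp_eq (U : Set (M × N))
    (hU : ∀ n (x : Fin n → M) (y : Fin n → N), (∀ i, (x i, y i) ∈ U) → tp L x = tp L y)
    (hl : ∀ m, ∃ n, (m, n) ∈ U) (hr : ∀ n, ∃ m, (m, n) ∈ U) : Nonempty (M ≃[L] N) := by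
  choose f hf using hl
  let F : M ↪ₑ[L] N := ⟨f, fun n φ x => (Set.ext_iff.1 (hU n x (f ∘ x) fun i => hf _) φ).symm⟩
  have hsurj : Function.Surjective F := by
    intro n
    obtain ⟨m, hm⟩ := hr n
    have h := hU 2 ![m, m] ![n, f m] (Fin.forall_fin_two.2 ⟨hm, hf m⟩)
    have heq := (Set.ext_iff.1 h ((Term.var 0).equal (Term.var 1))).1 (by simp)
    simp only [mem_tp, Formula.realize_equal, Term.realize_var] at heq
    exact ⟨m, heq.symm⟩
  exact ⟨⟨Equiv.ofBijective F ⟨F.injective, hsurj⟩, F.map_fun, F.map_rel⟩⟩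

section BackAndForth

variable (hM : ∀ n, (range (tp L (M := M) (α := Fin n))).Finite)
include hM

theorem IsPartialElementary.exists_insert_left {s : Set (M × N)} (hs : IsPartialElementary L s)
    [Finite s] (m : M) : ∃ n, IsPartialElementary L (insert (m, n) s) := by
  obtain ⟨w, hw⟩ := exists_tp_sumElim_eq_right (finite_range_tp hM) hs fun _ : Unit => m
  exact ⟨w (), (isPartialElementary_range hw).mono (insert_subset_range_sumElim s m (w ()))⟩

theorem IsPartialElementary.exists_insert_right {s : Set (M × N)} (hs : IsPartialElementary L s)
    [Finite s] (n : N) : ∃ m, IsPartialElementary L (insert (m, n) s) := by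
  obtain ⟨v, hv⟩ := exists_tp_sumElim_eq_left (finite_range_tp hM) hs fun _ : Unit => n
  exact ⟨v (), (isPartialElementary_range hv).mono (insert_subset_range_sumElim s (v ()) n)⟩

variable (L M N) in
abbrev FinitePartialElementary : Type _ :=
  {s : Set (M × N) // s.Finite ∧ IsPartialElementary L s}

def FinitePartialElementary.definedAt : M ⊕ N → Order.Cofinal (FinitePartialElementary L M N)
  | .inl m => ⟨{s | ∃ n, (m, n) ∈ s.1}, fun ⟨s, hfin, hs⟩ => by
      have := hfin.to_subtype
      obtain ⟨n, hn⟩ := hs.exists_insert_left hM m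
      exact ⟨⟨_, hfin.insert _, hn⟩, ⟨n, mem_insert _ _⟩, subset_insert _ _⟩⟩
  | .inr n => ⟨{s | ∃ m, (m, n) ∈ s.1}, fun ⟨s, hfin, hs⟩ => by
      have := hfin.to_subtype
      obtain ⟨m, hm⟩ := hs.exists_insert_right hM n
      exact ⟨⟨_, hfin.insert _, hm⟩, ⟨m, mem_insert _ _⟩, subset_insert _ _⟩⟩

theorem nonempty_equiv_of_finite_range_tp [Countable M] [Countable N] (h : M ≅[L] N) :
    Nonempty (M ≃[L] N) := by
  have := Encodable.ofCountable (M ⊕ N)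
  let s₀ : FinitePartialElementary L M N := ⟨∅, finite_empty, isPartialElementary_empty h⟩
  let D := FinitePartialElementary.definedAt (N := N) hM
  let seq := Order.sequenceOfCofinals s₀ D
  have hseq : Monotone fun k => (seq k).1 := fun _ _ hkl =>
    Order.sequenceOfCofinals.monotone s₀ D hkl
  refine nonempty_equiv_of_forall_tp_eq (⋃ k, (seq k).1)
    (fun _ _ _ => tp_eq_of_forall_mem_iUnion hseq fun k => (seq k).2.2) (fun m => ?_) (fun n => ?_)
  · obtain ⟨n, hn⟩ := Order.sequenceOfCofinals.encode_mem s₀ D (Sum.inl m)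
    exact ⟨n, mem_iUnion_of_mem _ hn⟩
  · obtain ⟨m, hm⟩ := Order.sequenceOfCofinals.encode_mem s₀ D (Sum.inr n)
    exact ⟨m, mem_iUnion_of_mem _ hm⟩

end BackAndForth

end FirstOrder.Language

open FirstOrder.Language Set in
theorem stmt7_general {L : FirstOrder.Language} {M : Type} [L.Structure M]
    [Countable M] (e : M ≃ ℕ)
    (hAZ : ∀ n : ℕ, 1 ≤ n → ∀ b : ℕ → Fin n → M, ∃ i j : ℕ, i < j ∧
      ∃ f : M ↪ₑ[L] M, (∀ x y : M, e x < e y → e (f x) < e (f y)) ∧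
        ∀ k : Fin n, f (b i k) = b j k) :
    Cardinal.aleph0.Categorical (L.completeTheory M) := by
  have hM : ∀ n, (range (tp L (M := M) (α := Fin n))).Finite := by
    rintro (_ | n)
    · exact finite_range _
    · refine finite_range_tp_of_exists_elementaryEmbedding fun b => ?_
      obtain ⟨i, j, hij, f, -, hf⟩ := hAZ (n + 1) n.succ_pos b
      exact ⟨i, j, hij.ne, f, funext hf⟩
  have iso (N : (L.completeTheory M).ModelType) (hN : #N = ℵ₀) : Nonempty (M ≃[L] N) :=
    have : Countable N := mk_le_aleph0_iff.1 hN.le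
    nonempty_equiv_of_finite_range_tp hM
      (elementarilyEquivalent_iff.2 fun φ => (realize_iff_of_model_completeTheory M N φ).symm)
  intro N₁ N₂ h₁ h₂
  obtain ⟨f₁⟩ := iso N₁ h₁
  obtain ⟨f₂⟩ := iso N₂ h₂
  exact ⟨f₂.comp f₁.symm⟩

/-- If a countably infinite structure `M` has an
AZ-enumeration — an enumeration `e : M ≃ ℕ` (a linear ordering `≺` of type `ω`)
such that for every `n ≥ 1` and every sequence of `n`-tuples `b i` from `M`
there are `i < j` and a `≺`-preserving elementary self-embedding `f` of `M`
with `f (b i) = b j` — then `M` is `ω`-categorical, i.e. the complete theory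
of `M` is `ℵ₀`-categorical. -/
theorem stmt7 {L : FirstOrder.Language} {M : Type} [L.Structure M]
    [Countable M] [Infinite M] (e : M ≃ ℕ)
    (hAZ : ∀ n : ℕ, 1 ≤ n → ∀ b : ℕ → Fin n → M, ∃ i j : ℕ, i < j ∧
      ∃ f : M ↪ₑ[L] M, (∀ x y : M, e x < e y → e (f x) < e (f y)) ∧
        ∀ k : Fin n, f (b i k) = b j k) :
    Cardinal.aleph0.Categorical (L.completeTheory M) :=
  stmt7_general e hAZ
end

section
/- If the family of finite substructures of an ω-categorical relational structure M has no infinite antichain under embeddings induced by automorphisms of M, then for every finite field GF(q) the permutation module GF(q)M over the group ring GF(q)Aut(M) satisfies the ascending chain condition on submodules. -/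
/-!
Suppose `c₀ < c₁ < ⋯` is a strictly increasing chain of `Aut M`-invariant subspaces of `F M`, and
pick `vₖ ∈ cₖ₊₁ \ cₖ` with as few nonzero coordinates as possible. If `i < j` and an automorphism
`g` maps `supp vᵢ` into `supp vⱼ`, then `g vᵢ ∈ cⱼ`, and subtracting a suitable multiple of it from
`vⱼ` kills one coordinate of `vⱼ` without leaving `cⱼ₊₁ \ cⱼ`, contradicting minimality. So the
supports `supp vₖ` admit no embedding forward in the sequence; along a subsequence whose sizes do
not decrease a backward embedding is a bijection whose inverse is a forward one, so that
subsequence is an infinite antichain.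
-/

open FirstOrder Finset Function

namespace Finsupp

variable {α β F : Type*} [DivisionRing F] [DecidableEq β]

theorem exists_card_support_sub_smul_mapDomain_lt {f : α → β} (hf : Injective f)
    {v : α →₀ F} {w : β →₀ F} (hv : v ≠ 0) (hvw : v.support.image f ⊆ w.support) :
    ∃ a : F, #(w - a • v.mapDomain f).support < #w.support := by
  obtain ⟨x, hx⟩ := support_nonempty_iff.2 hv
  refine ⟨w (f x) * (v x)⁻¹, card_lt_card ?_⟩
  have hsub : (w - (w (f x) * (v x)⁻¹) • v.mapDomain f).support ⊆ w.support :=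
    support_sub.trans <| union_subset subset_rfl <|
      support_smul.trans <| mapDomain_support.trans hvw
  refine (ssubset_iff_of_subset hsub).2 ⟨f x, hvw (mem_image_of_mem f hx), ?_⟩
  rw [notMem_support_iff]
  simp [mapDomain_apply hf, mem_support_iff.1 hx]

theorem not_image_support_subset_of_minimalFor {p q : Submodule F (β →₀ F)} (hpq : p ≤ q)
    {f : α → β} (hf : Injective f) {v : α →₀ F} {w : β →₀ F} (hv : v ≠ 0)
    (hfv : v.mapDomain f ∈ p)
    (hw : MinimalFor (fun u => u ∈ q ∧ u ∉ p) (fun u => #u.support) w) :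
    ¬ v.support.image f ⊆ w.support := by
  intro hvw
  obtain ⟨a, ha⟩ := exists_card_support_sub_smul_mapDomain_lt hf hv hvw
  have hsmul : a • v.mapDomain f ∈ p := p.smul_mem a hfv
  refine hw.not_lt ⟨q.sub_mem hw.prop.1 (hpq hsmul), fun hp => hw.prop.2 ?_⟩ ha
  simpa using p.add_mem hp hsmul

end Finsupp

theorem Finset.image_symm_subset_of_image_subset {α β : Type*} [DecidableEq α] [DecidableEq β]
    {e : α ≃ β} {s : Finset α} {t : Finset β} (hst : s.image e ⊆ t) (hcard : #t ≤ #s) :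
    t.image e.symm ⊆ s := by
  have : s.image e = t :=
    eq_of_subset_of_card_le hst (hcard.trans_eq (card_image_of_injective _ e.injective).symm)
  simp [← this, image_image]

section Invariant

variable {α ι : Type*} (act : ι → Equiv.Perm α)

theorem exists_lt_image_subset [DecidableEq α] (hsymm : ∀ i, ∃ j, act j = (act i).symm)
    (hanti : ¬ ∃ A : ℕ → Finset α, ∀ i j : ℕ, i ≠ j → ¬ ∃ k, (A i).image (act k) ⊆ A j)
    (A : ℕ → Finset α) : ∃ i j, i < j ∧ ∃ k, (A i).image (act k) ⊆ A j := by
  obtain ⟨g, hg⟩ := wellQuasiOrdered_le.exists_monotone_subseq fun n => #(A n)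
  contrapose! hanti
  refine ⟨A ∘ g, fun i j hij k hk => ?_⟩
  rcases hij.lt_or_gt with h | h
  · exact hanti _ _ (g.strictMono h) k hk
  · obtain ⟨k', hk'⟩ := hsymm k
    exact hanti _ _ (g.strictMono h) k' (hk' ▸ image_symm_subset_of_image_subset hk (hg _ _ h.le))

/-- For `act` the automorphisms of `M`, these are the `F Aut(M)`-submodules of the permutation
module `F M`. -/
def Submodule.IsInvariantUnder {F : Type*} [Semiring F] (p : Submodule F (α →₀ F)) : Prop :=
  ∀ k, ∀ v ∈ p, v.mapDomain (act k) ∈ p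

theorem wellFoundedGT_isInvariantUnder [DecidableEq α] (F : Type*) [DivisionRing F]
    (hsymm : ∀ i, ∃ j, act j = (act i).symm)
    (hanti : ¬ ∃ A : ℕ → Finset α, ∀ i j : ℕ, i ≠ j → ¬ ∃ k, (A i).image (act k) ⊆ A j) :
    WellFoundedGT {p : Submodule F (α →₀ F) // p.IsInvariantUnder act} := by
  rw [WellFoundedGT, isWellFounded_iff, wellFounded_iff_isEmpty_descending_chain]
  refine ⟨fun ⟨d, hd⟩ => ?_⟩
  have hmono : Monotone d := monotone_nat_of_le_succ fun n => (hd n).le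
  have hgap (n : ℕ) : ∃ v, v ∈ (d (n + 1)).1 ∧ v ∉ (d n).1 := SetLike.exists_of_lt (hd n)
  choose v hv using fun n =>
    exists_minimalFor_of_wellFoundedLT _ (fun v : α →₀ F => #v.support) (hgap n)
  obtain ⟨i, j, hij, k, hk⟩ := exists_lt_image_subset act hsymm hanti fun n => (v n).support
  have hvi : v i ≠ 0 := fun h => (hv i).prop.2 (h ▸ (d i).1.zero_mem)
  have hmove : (v i).mapDomain (act k) ∈ (d j).1 :=
    (d j).2 k _ (hmono (Nat.succ_le_of_lt hij) (hv i).prop.1)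
  exact Finsupp.not_image_support_subset_of_minimalFor (hd j).le (act k).injective hvi hmove
    (hv j) hk

end Invariant

theorem stmt9_general {L : FirstOrder.Language} {M : Type} [L.Structure M]
    [DecidableEq M]
    {F : Type} [Field F]
    (hantichain : ¬ ∃ A : ℕ → Finset M, ∀ i j : ℕ, i ≠ j →
      ¬ ∃ g : M ≃[L] M, (A i).image g ⊆ A j)
    (c : ℕ → Submodule F (M →₀ F)) (hmono : Monotone c)
    (hinv : ∀ (n : ℕ) (g : M ≃[L] M), ∀ v ∈ c n, Finsupp.mapDomain g v ∈ c n) :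
    ∃ n : ℕ, ∀ m : ℕ, n ≤ m → c m = c n := by
  let act : (M ≃[L] M) → Equiv.Perm M := fun g => g.toEquiv
  have := wellFoundedGT_isInvariantUnder act F (fun g => ⟨g.symm, rfl⟩) hantichain
  obtain ⟨n, hn⟩ := WellFoundedGT.monotone_chain_condition
    (α := {p : Submodule F (M →₀ F) // p.IsInvariantUnder act}) ⟨fun n => ⟨c n, hinv n⟩, hmono⟩
  exact ⟨n, fun m hm => congrArg Subtype.val (hn m hm).symm⟩

/-- Proposition 3.4 of the paper. Let `M` be a countably
infinite `ω`-categorical relational structure (finite substructures of a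
relational structure are just finite subsets).  If the family of finite
substructures of `M` has no infinite antichain with respect to embeddings
induced by automorphisms of `M`, then for every finite field `F = GF(q)` the
permutation module `F M` (the `F`-vector space `M →₀ F` with `Aut M` permuting
the basis) satisfies the ascending chain condition on `F Aut(M)`-submodules
(`Aut M`-invariant `F`-subspaces). -/
theorem stmt9 {L : FirstOrder.Language} {M : Type} [L.Structure M]
    [Countable M] [Infinite M] [DecidableEq M]
    (hcat : Cardinal.aleph0.Categorical (L.completeTheory M))
    {F : Type} [Field F] [Fintype F]
    (hantichain : ¬ ∃ A : ℕ → Finset M, ∀ i j : ℕ, i ≠ j →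
      ¬ ∃ g : M ≃[L] M, (A i).image g ⊆ A j)
    (c : ℕ → Submodule F (M →₀ F)) (hmono : Monotone c)
    (hinv : ∀ (n : ℕ) (g : M ≃[L] M), ∀ v ∈ c n, Finsupp.mapDomain g v ∈ c n) :
    ∃ n : ℕ, ∀ m : ℕ, n ≤ m → c m = c n :=
  stmt9_general hantichain c hmono hinv
end

section
/- If L is a countable dense linear order without endpoints, then every enumeration of L of order type ω is a nice enumeration of the structure (L, <). -/
/-!
For each `n` record how many points enumerated before `a n` lie below and above `a n`.
By Dickson's lemma some `i < j` has at least as many such points on each side of `a j` as on the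
corresponding side of `a i`. Then the finite configuration around `a i` embeds, order-preservingly
and sending `a i` to `a j`, into the one around `a j`, and by the forth half of the
back-and-forth argument this finite embedding extends to a self-embedding of the countable dense
order `L`.
-/

open Finset

namespace Order.PartialIso

variable {α β : Type*} [LinearOrder α] [LinearOrder β]

lemma cmp_eq_of_mem_ideal (I : Ideal (PartialIso α β)) {f g : PartialIso α β}
    (hf : f ∈ I) (hg : g ∈ I) {p q : α × β} (hp : p ∈ f.val) (hq : q ∈ g.val) :
    cmp p.1 q.1 = cmp p.2 q.2 := by
  obtain ⟨m, -, hfm, hgm⟩ := I.directed _ hf _ hg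
  exact m.prop p (hfm hp) q (hgm hq)

theorem exists_orderEmbedding_extending [Countable α] [DenselyOrdered β] [NoMinOrder β]
    [NoMaxOrder β] [Nonempty β] (f : PartialIso α β) :
    ∃ g : α ↪o β, ∀ p ∈ f.val, g p.1 = p.2 := by
  cases nonempty_encodable α
  let I := idealOfCofinals f (definedAtLeft β)
  let F a := funOfIdeal a I (cofinal_meets_idealOfCofinals _ _ a)
  refine ⟨OrderEmbedding.ofStrictMono (fun a ↦ (F a).val) fun a₁ a₂ h ↦ ?_, fun p hp ↦ ?_⟩
  · obtain ⟨g₁, hg₁, ha₁⟩ := (F a₁).prop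
    obtain ⟨g₂, hg₂, ha₂⟩ := (F a₂).prop
    exact (lt_iff_lt_of_cmp_eq_cmp (cmp_eq_of_mem_ideal I hg₁ hg₂ ha₁ ha₂)).mp h
  · obtain ⟨g, hg, hpg⟩ := (F p.1).prop
    have h := cmp_eq_of_mem_ideal I hg (mem_idealOfCofinals _ _) hpg hp
    rw [cmp_self_eq_eq] at h
    exact (cmp_eq_eq_iff _ _).mp h.symm

end Order.PartialIso

section

variable {α β : Type*} [LinearOrder α] [LinearOrder β]

theorem StrictMono.exists_orderEmbedding_comp_eq [Countable α] [DenselyOrdered β]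
    [NoMinOrder β] [NoMaxOrder β] [Nonempty β] {ι : Type*} [LinearOrder ι] [Finite ι]
    {x : ι → α} {y : ι → β} (hx : StrictMono x) (hy : StrictMono y) :
    ∃ g : α ↪o β, g ∘ x = y := by
  classical
  have := Fintype.ofFinite ι
  let f : Order.PartialIso α β := ⟨univ.image fun i ↦ (x i, y i), by
    simp only [mem_image, mem_univ, true_and]
    rintro _ ⟨i, rfl⟩ _ ⟨j, rfl⟩
    rw [hx.cmp_map_eq, hy.cmp_map_eq]⟩
  obtain ⟨g, hg⟩ := f.exists_orderEmbedding_extending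
  exact ⟨g, funext fun i ↦ hg _ (mem_image_of_mem _ (mem_univ i))⟩

theorem Fin.strictMono_append {m n : ℕ} {x : Fin m → α} {y : Fin n → α}
    (hx : StrictMono x) (hy : StrictMono y) (hxy : ∀ i j, x i < y j) :
    StrictMono (Fin.append x y) := by
  intro i j hij
  induction i using Fin.addCases with
  | left i =>
    induction j using Fin.addCases with
    | left j => simpa using hx hij
    | right j => simpa using hxy i j
  | right i =>
    induction j using Fin.addCases with
    | left j => exact absurd hij (not_lt.mpr (Fin.le_def.mpr (by simp; omega)))
    | right j => simpa using hy ((Fin.natAdd_lt_natAdd_iff m).mp hij)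

lemma Fin.strictMono_append_cons {m n : ℕ} {x : Fin m → α} {y : Fin n → α} {u : α}
    (hx : StrictMono x) (hy : StrictMono y) (hxu : ∀ i, x i < u) (huy : ∀ j, u < y j) :
    StrictMono (Fin.append x (Fin.cons u y)) :=
  Fin.strictMono_append hx (Fin.strictMono_cons.2 ⟨huy, hy⟩) fun i j ↦
    Fin.cases (hxu i) (fun j ↦ (hxu i).trans (huy j)) j

theorem exists_orderEmbedding_mapsTo_of_card_le [Countable α] [DenselyOrdered β]
    [NoMinOrder β] [NoMaxOrder β] [Nonempty β] {A B : Finset α} {A' B' : Finset β}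
    {u : α} {v : β} (hA : ∀ c ∈ A, c < u) (hB : ∀ c ∈ B, u < c)
    (hA' : ∀ c ∈ A', c < v) (hB' : ∀ c ∈ B', v < c) (hAA' : #A ≤ #A') (hBB' : #B ≤ #B') :
    ∃ f : α ↪o β, f u = v ∧ Set.MapsTo f A A' ∧ Set.MapsTo f B B' := by
  let x := Fin.append (A.orderEmbOfFin rfl) (Fin.cons u (B.orderEmbOfFin rfl))
  let y := Fin.append (A'.orderEmbOfCardLe hAA') (Fin.cons v (B'.orderEmbOfCardLe hBB'))
  have hx : StrictMono x := Fin.strictMono_append_cons (A.orderEmbOfFin rfl).strictMono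
    (B.orderEmbOfFin rfl).strictMono (fun i ↦ hA _ (A.orderEmbOfFin_mem rfl i))
    (fun j ↦ hB _ (B.orderEmbOfFin_mem rfl j))
  have hy : StrictMono y := Fin.strictMono_append_cons (A'.orderEmbOfCardLe hAA').strictMono
    (B'.orderEmbOfCardLe hBB').strictMono (fun i ↦ hA' _ (A'.orderEmbOfCardLe_mem hAA' i))
    (fun j ↦ hB' _ (B'.orderEmbOfCardLe_mem hBB' j))
  obtain ⟨f, hf⟩ := hx.exists_orderEmbedding_comp_eq hy
  have hfx : ∀ k, f (x k) = y k := congrFun hf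
  refine ⟨f, by simpa [x, y] using hfx (Fin.natAdd _ 0), ?_, ?_⟩
  · intro c hc
    obtain ⟨i, rfl⟩ : c ∈ Set.range (A.orderEmbOfFin rfl) := by
      rwa [range_orderEmbOfFin]
    have h := hfx (Fin.castAdd _ i)
    simp only [x, y, Fin.append_left] at h
    rw [h]
    exact A'.orderEmbOfCardLe_mem hAA' i
  · intro c hc
    obtain ⟨j, rfl⟩ : c ∈ Set.range (B.orderEmbOfFin rfl) := by
      rwa [range_orderEmbOfFin]
    have h := hfx (Fin.natAdd _ j.succ)
    simp only [x, y, Fin.append_right, Fin.cons_succ] at h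
    rw [h]
    exact B'.orderEmbOfCardLe_mem hBB' j

end

theorem stmt13_general {L : Type*} [LinearOrder L] [DenselyOrdered L]
    [NoMinOrder L] [NoMaxOrder L] [Nonempty L]
    (e : L ≃ ℕ) (a : ℕ → L) :
    ∃ i j : ℕ, i < j ∧ ∃ f : L ↪o L, f (a i) = a j ∧
      ∀ c : L, e c < e (a i) → e (f c) < e (a j) := by
  have : Countable L := e.injective.countable
  let S n : Finset L := (range (e (a n))).map e.symm.toEmbedding
  have hS : ∀ {n c}, c ∈ S n ↔ e c < e (a n) := by simp [S]
  let A n := {c ∈ S n | c < a n}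
  let B n := {c ∈ S n | a n < c}
  obtain ⟨i, j, hij, hcard⟩ := wellQuasiOrdered_le fun n ↦ (#(A n), #(B n))
  obtain ⟨f, hfa, hfA, hfB⟩ := exists_orderEmbedding_mapsTo_of_card_le (A := A i) (B := B i)
    (A' := A j) (B' := B j) (fun c hc ↦ (mem_filter.1 hc).2) (fun c hc ↦ (mem_filter.1 hc).2)
    (fun c hc ↦ (mem_filter.1 hc).2) (fun c hc ↦ (mem_filter.1 hc).2) hcard.1 hcard.2
  refine ⟨i, j, hij, f, hfa, fun c hc ↦ ?_⟩
  rcases lt_trichotomy c (a i) with h | rfl | h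
  · exact hS.1 (mem_filter.1 (hfA (mem_filter.2 ⟨hS.2 hc, h⟩))).1
  · exact absurd hc (lt_irrefl _)
  · exact hS.1 (mem_filter.1 (hfB (mem_filter.2 ⟨hS.2 hc, h⟩))).1

/-- Calderoni–Evans observation. Let `(L, <)` be a countable
dense linear order without endpoints (so `(L, <) ≅ ℚ`), and let `e : L ≃ ℕ` be
any enumeration of `L` of order type `ω`.  Then `e` is a nice enumeration of
the structure `(L, <)`: for every `e`-increasing sequence `(a i)` there are
`i < j` and a self-embedding `f` of the order `(L, <)` (an elementary map of
this structure) with `f (a i) = a j` which maps the `e`-initial segment below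
`a i` into the `e`-initial segment below `a j`. -/
theorem stmt13 {L : Type*} [LinearOrder L] [DenselyOrdered L]
    [NoMinOrder L] [NoMaxOrder L] [Nonempty L]
    (e : L ≃ ℕ) (a : ℕ → L) (ha : StrictMono (fun i => e (a i))) :
    ∃ i j : ℕ, i < j ∧ ∃ f : L ↪o L, f (a i) = a j ∧
      ∀ c : L, e c < e (a i) → e (f c) < e (a j) :=
  stmt13_general e a
end

section
/- If (L, <) is a well-ordered subset of a structure M such that every order-preserving injection L → L extends to an automorphism of M, and L is order-indiscernible in M, then L cannot be the union of the supports of a set V of elements of a permutation module FM over FAut(M) generating a submodule that is not finitely generated. -/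
/-!
Write `tailType a` for the order type of the tail `[a, ∞)` of the well order `A`. It is antitone,
so it takes only finitely many values. If `a < b` have the same tail type, an isomorphism of
their tails, extended by the identity below `a`, is a strictly monotone self-map of `A` and hence
extends to an automorphism. Consequently the differences `e_u - e_u'` inside one tail-type class
form a single orbit up to sign, and a downward induction over the support of a vector `w` shows
that they lie in `F Aut(M) · w` as soon as the class meets the support of `w`. Modulo these
finitely many class-difference modules, every vector supported on `A` is congruent to one
supported on a finite set of class representatives; a finite-dimensional space is spanned by
finitely many of the reduced vectors, and the theorem follows.
-/

open FirstOrder Cardinal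

/-- The `F Aut(M)`-submodule of the permutation module `M →₀ F` generated by a
set `s` of vectors: the `F`-span of all `Aut(M)`-images of elements of `s`. -/
noncomputable def autSpan (L : FirstOrder.Language) {M : Type} [L.Structure M]
    (F : Type) [Field F] (s : Set (M →₀ F)) : Submodule F (M →₀ F) :=
  Submodule.span F {w | ∃ (g : M ≃[L] M) (v : M →₀ F), v ∈ s ∧
    w = Finsupp.mapDomain g v}

open Set

universe u

section TailType

variable {α : Type u} [LinearOrder α] [WellFoundedLT α]

noncomputable def tailType (a : α) : Ordinal.{u} :=
  Ordinal.type ((· < ·) : Ici a → Ici a → Prop)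

theorem OrderIso.tailType_apply {β : Type u} [LinearOrder β] [WellFoundedLT β] (e : α ≃o β)
    (a : α) : tailType (e a) = tailType a :=
  (e.Ici a).toRelIsoLT.ordinalType_congr.symm

theorem tailType_coe {c : α} (a : Ici c) : tailType (a : α) = tailType a := by
  let e : Ici a ≃o Ici (a : α) :=
    { Equiv.subtypeSubtypeEquivSubtype fun {x} (h : (a : α) ≤ x) => a.2.trans h with
      map_rel_iff' := Iff.rfl }
  exact e.toRelIsoLT.ordinalType_congr.symm

theorem tailType_antitone : Antitone (tailType : α → Ordinal) := fun _ _ h =>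
  Ordinal.type_le_iff'.2
    ⟨(OrderEmbedding.ofStrictMono (inclusion (Ici_subset_Ici.2 h)) fun _ _ => id).ltEmbedding⟩

theorem Antitone.finite_range {β : Type*} [LinearOrder β] [WellFoundedLT β] {f : α → β}
    (hf : Antitone f) : (range f).Finite := by
  choose s hs using fun y : range f => y.2
  have : WellFoundedGT (range f) := StrictAnti.wellFoundedGT (f := s) fun y y' hyy' =>
    lt_of_not_ge fun h => hyy'.not_ge (Subtype.coe_le_coe.1 (by simpa only [hs] using hf h))
  exact finite_coe_iff.1 (Finite.of_wellFoundedLT_wellFoundedGT _)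

theorem exists_strictMono_map_eq {a b : α} (hab : a ≤ b) (h : tailType a = tailType b) :
    ∃ f : α → α, StrictMono f ∧ f a = b ∧ (∀ x < a, f x = x) ∧
      ∀ x, tailType (f x) = tailType x := by
  let e : Ici a ≃o Ici b := OrderIso.ofRelIsoLT (Ordinal.type_eq.1 h).some
  have he : ∀ x (hx : a ≤ x), tailType (e ⟨x, hx⟩ : α) = tailType x := fun x hx => by
    rw [tailType_coe, e.tailType_apply, ← tailType_coe]
  refine ⟨fun x => if hx : a ≤ x then e ⟨x, hx⟩ else x, fun x y hxy => ?_, ?_,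
    fun x hx => dif_neg hx.not_ge, fun x => ?_⟩
  · by_cases hx : a ≤ x
    · have hy : a ≤ y := hx.trans hxy.le
      simp only [dif_pos hx, dif_pos hy]
      exact e.strictMono (Subtype.mk_lt_mk.2 hxy)
    · by_cases hy : a ≤ y
      · simp only [dif_neg hx, dif_pos hy]
        exact (not_le.1 hx).trans_le (hab.trans (e ⟨y, hy⟩).2)
      · simpa only [dif_neg hx, dif_neg hy] using hxy
  · simp only [le_refl, dif_pos]
    exact congrArg Subtype.val e.map_bot
  · by_cases hx : a ≤ x
    · simpa only [dif_pos hx] using he x hx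
    · simp only [dif_neg hx]

theorem exists_gt_tailType_eq {a u : α} (hu : tailType u = tailType a) (hne : u ≠ a) :
    ∃ b, a < b ∧ tailType b = tailType a := by
  rcases hne.lt_or_gt with hua | hau
  · obtain ⟨f, hf, hfu, -, hff⟩ := exists_strictMono_map_eq hua.le hu
    exact ⟨f a, hfu.symm.trans_lt (hf hua), hff a⟩
  · exact ⟨u, hau, hu⟩

/-- Push `a` and `u` up to `max a u`, then the images of `b` and `u'` up to their maximum. -/
theorem exists_strictMono_pair_eq {a b u u' : α} (hab : a < b) (huu' : u < u')
    (hb : tailType b = tailType a) (hu : tailType u = tailType a)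
    (hu' : tailType u' = tailType a) :
    ∃ f₁ f₂ : α → α, StrictMono f₁ ∧ StrictMono f₂ ∧ f₁ a = f₂ u ∧ f₁ b = f₂ u' := by
  have max_tailType : ∀ {x y : α}, tailType x = tailType a → tailType y = tailType a →
      tailType (max x y) = tailType a := fun {x y} hx hy => by
    rcases max_choice x y with h | h <;> rw [h] <;> assumption
  have hz : tailType (max a u) = tailType a := max_tailType rfl hu
  obtain ⟨f₁, hf₁, hf₁a, -, hf₁t⟩ := exists_strictMono_map_eq (le_max_left a u) hz.symm
  obtain ⟨f₂, hf₂, hf₂u, -, hf₂t⟩ :=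
    exists_strictMono_map_eq (le_max_right a u) (hu.trans hz.symm)
  have hb₁ : tailType (f₁ b) = tailType a := (hf₁t b).trans hb
  have hu₁ : tailType (f₂ u') = tailType a := (hf₂t u').trans hu'
  obtain ⟨h₁, hh₁, hh₁b, hh₁z, -⟩ :=
    exists_strictMono_map_eq (le_max_left _ _) (hb₁.trans (max_tailType hb₁ hu₁).symm)
  obtain ⟨h₂, hh₂, hh₂u, hh₂z, -⟩ :=
    exists_strictMono_map_eq (le_max_right _ _) (hu₁.trans (max_tailType hb₁ hu₁).symm)
  refine ⟨h₁ ∘ f₁, h₂ ∘ f₂, hh₁.comp hf₁, hh₂.comp hf₂, ?_, by simp [hh₁b, hh₂u]⟩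
  simp only [Function.comp_apply, hf₁a, hf₂u]
  rw [hh₁z _ (hf₁a.symm.trans_lt (hf₁ hab)), hh₂z _ (hf₂u.symm.trans_lt (hf₂ huu'))]

noncomputable def classRep (a : α) : α :=
  wellFounded_lt.min {b | tailType b = tailType a} ⟨a, rfl⟩

theorem tailType_classRep (a : α) : tailType (classRep a) = tailType a :=
  wellFounded_lt.min_mem {b | tailType b = tailType a} ⟨a, rfl⟩

theorem classRep_eq_of_tailType_eq {a b : α} (h : tailType a = tailType b) :
    classRep a = classRep b := by
  unfold classRep
  congr 1
  rw [h]

theorem finite_range_classRep : (range (classRep : α → α)).Finite := by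
  refine Finite.of_finite_image (f := tailType)
    (tailType_antitone.finite_range.subset (image_subset_range _ _)) ?_
  rintro _ ⟨a, rfl⟩ _ ⟨b, rfl⟩ h
  rw [tailType_classRep, tailType_classRep] at h
  exact classRep_eq_of_tailType_eq h

end TailType

theorem exists_finite_subset_image_subset_span {R V ι : Type*} [Semiring R] [AddCommMonoid V]
    [Module R V] {f : ι → V} {s : Set ι} (h : (Submodule.span R (f '' s)).FG) :
    ∃ t ⊆ s, t.Finite ∧ f '' s ⊆ Submodule.span R (f '' t) := by
  obtain ⟨s', hs's, hspan⟩ := (Submodule.fg_span_iff_fg_span_finset_subset _).1 h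
  have hsub : f '' s ⊆ Submodule.span R (s' : Set V) := hspan ▸ Submodule.subset_span
  exact exists_subset_image_finite_and (p := fun t => f '' s ⊆ Submodule.span R t) |>.1
    ⟨(s' : Set V), hs's, s'.finite_toSet, hsub⟩

theorem Finsupp.mapDomain_sub_self {α G : Type*} [AddCommGroup G] (f : α → α) (w : α →₀ G) :
    mapDomain f w - w = w.sum fun x c => single (f x) c - single x c := by
  rw [sum_sub, sum_single]
  rfl

theorem Set.Finite.exists_subset_image_Iio {β : Type*} {v : ℕ → β} {t : Set β} (ht : t.Finite)
    (hts : t ⊆ range v) : ∃ i, t ⊆ v '' Iio i := by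
  rw [← image_univ] at hts
  obtain ⟨u, -, hu, rfl⟩ := exists_subset_image_finite_and (p := (· = t)) |>.1 ⟨t, hts, ht, rfl⟩
  obtain ⟨n, hn⟩ := hu.bddAbove
  exact ⟨n + 1, image_mono fun k hk => Nat.lt_succ_of_le (hn hk)⟩

section PermutationModule

variable {L : Language} {M : Type} [L.Structure M] {F : Type} [Field F]
  {s t : Set (M →₀ F)} {w : M →₀ F}

theorem mem_autSpan (hw : w ∈ s) : w ∈ autSpan L F s :=
  Submodule.subset_span ⟨Language.Equiv.refl L M, w, hw, Finsupp.mapDomain_id.symm⟩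

theorem mapDomain_mem_autSpan (g : M ≃[L] M) (hw : w ∈ autSpan L F s) :
    Finsupp.mapDomain g w ∈ autSpan L F s := by
  have : (autSpan L F s).map (Finsupp.lmapDomain F F g) ≤ autSpan L F s := by
    rw [autSpan, Submodule.map_span, Submodule.span_le]
    rintro _ ⟨_, ⟨h, v, hv, rfl⟩, rfl⟩
    exact Submodule.subset_span ⟨g.comp h, v, hv, (Finsupp.mapDomain_comp).symm⟩
  exact this ⟨w, hw, rfl⟩

theorem autSpan_le_of_subset (h : s ⊆ autSpan L F t) : autSpan L F s ≤ autSpan L F t := by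
  rw [autSpan, Submodule.span_le]
  rintro _ ⟨g, v, hv, rfl⟩
  exact mapDomain_mem_autSpan g (h hv)

theorem autSpan_mono (h : s ⊆ t) : autSpan L F s ≤ autSpan L F t :=
  autSpan_le_of_subset (h.trans fun _ => mem_autSpan)

end PermutationModule

section ClassDifferences

variable {L : Language} {M : Type} [L.Structure M] {F : Type} [Field F]
  {A : Set M} [LinearOrder A] [WellFoundedLT A]

variable (L A) in
def StrictMonoExtendsToAut : Prop :=
  ∀ f : A → A, StrictMono f → ∃ g : M ≃[L] M, ∀ a : A, g a = f a

variable (L F A) in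
noncomputable def classDiffSpan (θ : Ordinal) : Submodule F (M →₀ F) :=
  autSpan L F {w | ∃ u u' : A, tailType u = θ ∧ tailType u' = θ ∧
    w = Finsupp.single (u : M) 1 - Finsupp.single (u' : M) 1}

theorem single_sub_single_mem_classDiffSpan {θ : Ordinal} {u u' : A} (hu : tailType u = θ)
    (hu' : tailType u' = θ) (c : F) :
    Finsupp.single (u : M) c - Finsupp.single (u' : M) c ∈ classDiffSpan L F A θ := by
  have h : Finsupp.single (u : M) (1 : F) - Finsupp.single (u' : M) 1 ∈ classDiffSpan L F A θ :=
    mem_autSpan ⟨u, u', hu, hu', rfl⟩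
  simpa [smul_sub] using Submodule.smul_mem _ c h

theorem StrictMonoExtendsToAut.exists_apply_eq_and_apply_eq (hA : StrictMonoExtendsToAut L A)
    {a b u u' : A} (hab : a < b) (huu' : u < u') (hb : tailType b = tailType a)
    (hu : tailType u = tailType a) (hu' : tailType u' = tailType a) :
    ∃ g : M ≃[L] M, g a = u ∧ g b = u' := by
  obtain ⟨f₁, f₂, hf₁, hf₂, hfa, hfb⟩ := exists_strictMono_pair_eq hab huu' hb hu hu'
  obtain ⟨g₁, hg₁⟩ := hA f₁ hf₁
  obtain ⟨g₂, hg₂⟩ := hA f₂ hf₂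
  refine ⟨g₂.symm.comp g₁, ?_, ?_⟩
  · rw [Language.Equiv.comp_apply, hg₁, hfa, ← hg₂, Language.Equiv.symm_apply_apply]
  · rw [Language.Equiv.comp_apply, hg₁, hfb, ← hg₂, Language.Equiv.symm_apply_apply]

theorem StrictMonoExtendsToAut.classDiffSpan_eq (hA : StrictMonoExtendsToAut L A) {a b : A}
    (hab : a < b) (hb : tailType b = tailType a) :
    classDiffSpan L F A (tailType a) =
      autSpan L F {Finsupp.single (a : M) 1 - Finsupp.single (b : M) 1} := by
  have hpair : ∀ u u' : A, u < u' → tailType u = tailType a → tailType u' = tailType a →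
      Finsupp.single (u : M) (1 : F) - Finsupp.single (u' : M) 1 ∈
        autSpan L F {Finsupp.single (a : M) 1 - Finsupp.single (b : M) 1} := by
    intro u u' huu' hu hu'
    obtain ⟨g, hga, hgb⟩ := hA.exists_apply_eq_and_apply_eq hab huu' hb hu hu'
    have h := mapDomain_mem_autSpan g (mem_autSpan (L := L) (mem_singleton
      (Finsupp.single (a : M) (1 : F) - Finsupp.single (b : M) 1)))
    rwa [Finsupp.mapDomain_sub, Finsupp.mapDomain_single, Finsupp.mapDomain_single, hga, hgb]
      at h
  refine le_antisymm (autSpan_le_of_subset ?_) (autSpan_le_of_subset ?_)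
  · rintro _ ⟨u, u', hu, hu', rfl⟩
    rcases lt_trichotomy u u' with h | rfl | h
    · exact hpair u u' h hu hu'
    · simp
    · simpa using neg_mem (hpair u' u h hu' hu)
  · exact singleton_subset_iff.2 (single_sub_single_mem_classDiffSpan rfl hb 1)

/-- Extend the shift `a ↦ b` of the tail above `a` to an automorphism `g`: then `g w - w` is
`w a • (e_b - e_a)` plus terms for support points above `a` (those below are fixed), each lying
in a class-difference module which the hypothesis puts into the span of `w`. -/
theorem StrictMonoExtendsToAut.single_sub_single_mem_autSpan (hA : StrictMonoExtendsToAut L A)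
    {w : M →₀ F} (hw : ↑w.support ⊆ A) {a b : A} (ha : (a : M) ∈ w.support) (hab : a < b)
    (hb : tailType b = tailType a)
    (habove : ∀ x : A, (x : M) ∈ w.support → a < x →
      classDiffSpan L F A (tailType x) ≤ autSpan L F {w}) :
    Finsupp.single (a : M) (1 : F) - Finsupp.single (b : M) 1 ∈ autSpan L F {w} := by
  classical
  obtain ⟨f, hf, hfa, hfix, hft⟩ := exists_strictMono_map_eq hab.le hb.symm
  obtain ⟨g, hg⟩ := hA f hf
  have hwS : w ∈ autSpan L F {w} := mem_autSpan rfl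
  have hterm : ∀ x ∈ w.support.erase ↑a,
      Finsupp.single (g x) (w x) - Finsupp.single x (w x) ∈ autSpan L F {w} := by
    intro x hx
    obtain ⟨hxa, hx⟩ := Finset.mem_erase.1 hx
    lift x to A using hw hx
    rw [hg]
    rcases lt_or_gt_of_ne (Subtype.coe_ne_coe.1 hxa) with h | h
    · rw [hfix x h, sub_self]
      exact zero_mem _
    · exact habove x hx h (single_sub_single_mem_classDiffSpan (hft x) rfl _)
  have hsum : Finsupp.mapDomain g w - w =
      (Finsupp.single (g a) (w a) - Finsupp.single (a : M) (w a)) +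
        ∑ x ∈ w.support.erase ↑a, (Finsupp.single (g x) (w x) - Finsupp.single x (w x)) := by
    rw [Finset.add_sum_erase _ (fun x => Finsupp.single (g x) (w x) - Finsupp.single x (w x)) ha,
      Finsupp.mapDomain_sub_self]
    rfl
  have hmove : Finsupp.single (b : M) (w a) - Finsupp.single (a : M) (w a) ∈ autSpan L F {w} := by
    have h := sub_mem (sub_mem (mapDomain_mem_autSpan g hwS) hwS) (Submodule.sum_mem _ hterm)
    rwa [hsum, add_sub_cancel_right, hg, hfa] at h
  have h := Submodule.smul_mem _ (-(w a)⁻¹) hmove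
  rwa [smul_sub, Finsupp.smul_single, Finsupp.smul_single, smul_eq_mul, neg_mul,
    inv_mul_cancel₀ (Finsupp.mem_support_iff.1 ha), Finsupp.single_neg, Finsupp.single_neg,
    neg_sub_neg] at h

theorem StrictMonoExtendsToAut.classDiffSpan_le (hA : StrictMonoExtendsToAut L A)
    {w : M →₀ F} (hw : ↑w.support ⊆ A) {a : A} (ha : (a : M) ∈ w.support) :
    classDiffSpan L F A (tailType a) ≤ autSpan L F {w} := by
  have hfin : {x : A | (x : M) ∈ w.support}.Finite :=
    w.support.finite_toSet.preimage Subtype.val_injective.injOn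
  refine (hfin.wellFoundedOn (r := (· > ·))).induction ha
    (P := fun a => classDiffSpan L F A (tailType a) ≤ autSpan L F {w}) fun a ha habove => ?_
  by_cases hclass : ∃ b, a < b ∧ tailType b = tailType a
  · obtain ⟨b, hab, hb⟩ := hclass
    rw [hA.classDiffSpan_eq hab hb]
    exact autSpan_le_of_subset <| singleton_subset_iff.2 <|
      hA.single_sub_single_mem_autSpan hw ha hab hb fun x hx hax => habove x hx hax
  · have hsingle : ∀ u : A, tailType u = tailType a → u = a := fun u hu =>
      by_contra fun hne => hclass (exists_gt_tailType_eq hu hne)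
    refine autSpan_le_of_subset ?_
    rintro _ ⟨u, u', hu, hu', rfl⟩
    rw [hsingle u hu, hsingle u' hu', sub_self]
    exact zero_mem _

open Classical in
variable (A) in
noncomputable def toClassRep (x : M) : M :=
  if hx : x ∈ A then (classRep (⟨x, hx⟩ : A)).val else x

theorem mapDomain_toClassRep_mem_supported {w : M →₀ F} (hw : ↑w.support ⊆ A) :
    Finsupp.mapDomain (toClassRep A) w ∈
      Finsupp.supported F F (Subtype.val '' range (classRep : A → A)) := by
  classical
  refine (Finsupp.mem_supported _ _).2 fun y hy => ?_
  obtain ⟨x, hx, rfl⟩ := Finset.mem_image.1 (Finsupp.mapDomain_support hy)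
  lift x to A using hw hx
  rw [show toClassRep A x = classRep x from dif_pos x.2]
  exact mem_image_of_mem _ (mem_range_self x)

theorem mapDomain_toClassRep_sub_mem {w : M →₀ F} (hw : ↑w.support ⊆ A)
    {N : Submodule F (M →₀ F)}
    (hN : ∀ x : A, (x : M) ∈ w.support → classDiffSpan L F A (tailType x) ≤ N) :
    Finsupp.mapDomain (toClassRep A) w - w ∈ N := by
  rw [Finsupp.mapDomain_sub_self]
  refine Submodule.finsuppSum_mem _ _ _ _ fun x hx => ?_
  lift x to A using hw (Finsupp.mem_support_iff.2 hx)
  rw [show toClassRep A x = classRep x from dif_pos x.2]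
  exact hN x (Finsupp.mem_support_iff.2 hx)
    (single_sub_single_mem_classDiffSpan (tailType_classRep x) rfl _)

theorem StrictMonoExtendsToAut.exists_finite_classDiffSpan_le (hA : StrictMonoExtendsToAut L A)
    {s : Set (M →₀ F)} (hs : ∀ w ∈ s, ↑w.support ⊆ A) :
    ∃ t ⊆ s, t.Finite ∧ ∀ w ∈ s, ∀ x : A, (x : M) ∈ w.support →
      classDiffSpan L F A (tailType x) ≤ autSpan L F t := by
  let P : Set ((M →₀ F) × A) := {p | p.1 ∈ s ∧ (p.2 : M) ∈ p.1.support}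
  have hfin : ((fun p : (M →₀ F) × A => tailType p.2) '' P).Finite :=
    tailType_antitone.finite_range.subset (by rintro _ ⟨p, -, rfl⟩; exact mem_range_self _)
  obtain ⟨P', hP'P, hP', himage⟩ :=
    exists_subset_image_finite_and (p := (· = (fun p : (M →₀ F) × A => tailType p.2) '' P)) |>.1
      ⟨_, subset_rfl, hfin, rfl⟩
  refine ⟨Prod.fst '' P', ?_, hP'.image _, fun w hw x hx => ?_⟩
  · rintro _ ⟨p, hp, rfl⟩
    exact (hP'P hp).1
  · obtain ⟨⟨w', x'⟩, hp', hx'⟩ : tailType x ∈ (fun p : (M →₀ F) × A => tailType p.2) '' P' :=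
      himage ▸ ⟨(w, x), ⟨hw, hx⟩, rfl⟩
    rw [← hx']
    exact (hA.classDiffSpan_le (hs w' (hP'P hp').1) (hP'P hp').2).trans
      (autSpan_mono (singleton_subset_iff.2 ⟨_, hp', rfl⟩))

theorem StrictMonoExtendsToAut.exists_finite_autSpan_eq (hA : StrictMonoExtendsToAut L A)
    {s : Set (M →₀ F)} (hs : ∀ w ∈ s, ↑w.support ⊆ A) :
    ∃ t ⊆ s, t.Finite ∧ autSpan L F s = autSpan L F t := by
  let reduce : (M →₀ F) → (M →₀ F) := Finsupp.mapDomain (toClassRep A)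
  obtain ⟨t₁, ht₁s, ht₁, hcover⟩ := hA.exists_finite_classDiffSpan_le hs
  have hfg : (Submodule.span F (reduce '' s)).FG := by
    refine Submodule.FG.of_le
      (T := Finsupp.supported F F (Subtype.val '' range (classRep : A → A))) ?_
      (Submodule.span_le.2 ?_)
    · rw [Finsupp.supported_eq_span_single]
      exact Submodule.fg_span ((finite_range_classRep.image _).image _)
    · rintro _ ⟨w, hw, rfl⟩
      exact mapDomain_toClassRep_mem_supported (hs w hw)
  obtain ⟨t₂, ht₂s, ht₂, hreduce⟩ := exists_finite_subset_image_subset_span hfg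
  have hdiff : ∀ w ∈ s, reduce w - w ∈ autSpan L F (t₁ ∪ t₂) := fun w hw =>
    mapDomain_toClassRep_sub_mem (hs w hw) fun x hx =>
      (hcover w hw x hx).trans (autSpan_mono subset_union_left)
  have hspan : Submodule.span F (reduce '' t₂) ≤ autSpan L F (t₁ ∪ t₂) := by
    refine Submodule.span_le.2 ?_
    rintro _ ⟨w, hw, rfl⟩
    simpa using add_mem (hdiff w (ht₂s hw)) (mem_autSpan (subset_union_right hw))
  refine ⟨t₁ ∪ t₂, union_subset ht₁s ht₂s, ht₁.union ht₂,
    le_antisymm (autSpan_le_of_subset fun w hw => ?_) (autSpan_mono (union_subset ht₁s ht₂s))⟩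
  simpa using sub_mem (hspan (hreduce ⟨w, hw, rfl⟩)) (hdiff w hw)

end ClassDifferences

theorem stmt14_general {L : FirstOrder.Language} {M : Type} [L.Structure M]
    {F : Type} [Field F]
    (A : Set M) (r : A → A → Prop) (hwo : IsWellOrder A r)
    (hext : ∀ f : A → A, Function.Injective f →
      (∀ a b : A, r a b → r (f a) (f b)) →
      ∃ g : M ≃[L] M, ∀ a : A, g a = f a) :
    ¬ ∃ v : ℕ → (M →₀ F), (∀ i : ℕ, ((v i).support : Set M) ⊆ A) ∧
      ∀ i : ℕ, autSpan L F (Set.range v) ≠ autSpan L F (v '' Set.Iio i) := by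
  rintro ⟨v, hsupp, hne⟩
  let _ := IsWellOrder.linearOrder r
  have : WellFoundedLT A := ⟨hwo.wf⟩
  have hA : StrictMonoExtendsToAut L A := fun f hf => hext f hf.injective fun _ _ h => hf h
  obtain ⟨t, hts, ht, heq⟩ := hA.exists_finite_autSpan_eq (F := F) (forall_mem_range.2 hsupp)
  obtain ⟨i, hi⟩ := ht.exists_subset_image_Iio hts
  exact hne i (le_antisymm (heq ▸ autSpan_mono hi) (autSpan_mono (image_subset_range _ _)))

/-- special case of Theorem 3.3. Let `M` be a countably
infinite `ω`-categorical structure, `F` a field, and `A ⊆ M` a subset carrying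
a well-order `r` such that `(A, r)` is order-indiscernible in `M` and every
`r`-preserving injection `A → A` extends to an automorphism of `M`.  Then `A`
cannot be the union of the supports of a set `{v i}` of elements of the
permutation module `F M` generating an `F Aut(M)`-submodule that is not
finitely generated (i.e. with `⟨v₀, v₁, …⟩ ≠ ⟨v₀, …, v_{i-1}⟩` for all `i`). -/
theorem stmt14 {L : FirstOrder.Language} {M : Type} [L.Structure M]
    [Countable M] [Infinite M]
    (hcat : Cardinal.aleph0.Categorical (L.completeTheory M))
    {F : Type} [Field F]
    (A : Set M) (r : A → A → Prop) (hwo : IsWellOrder A r)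
    (hindisc : ∀ (n : ℕ) (x y : Fin n → A),
      (∀ i j : Fin n, i < j → r (x i) (x j)) →
      (∀ i j : Fin n, i < j → r (y i) (y j)) →
      ∀ φ : L.Formula (Fin n),
        φ.Realize (fun i => (x i : M)) ↔ φ.Realize (fun i => (y i : M)))
    (hext : ∀ f : A → A, Function.Injective f →
      (∀ a b : A, r a b → r (f a) (f b)) →
      ∃ g : M ≃[L] M, ∀ a : A, g a = f a) :
    ¬ ∃ v : ℕ → (M →₀ F), (∀ i : ℕ, ((v i).support : Set M) ⊆ A) ∧
      ∀ i : ℕ, autSpan L F (Set.range v) ≠ autSpan L F (v '' Set.Iio i) :=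
  stmt14_general A r hwo hext
end

section
/- If a class B of finite diagrams (conditions) fails the weak amalgamation property at some element D, then there exists a binary tree of extensions of D in B such that any two extensions lying above incomparable nodes of the tree cannot be amalgamated over D; in particular there are continuum many pairwise 'non-amalgamable' chains. -/
/-- tree construction in the proof of Theorem 2.2. Let
`(B, ≤)` be a countable partial order of conditions and `D ∈ B`.  Weak
amalgamation holds at `D` if there is `D' ≥ D` such that any two extensions of
`D'` have a common extension (over `D`).  If weak amalgamation fails at `D`,
then there is a map `φ` from the full binary tree `2^{<ω}` into extensions of
`D`, monotone along branches (with root `D`), such that the two immediate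
successors of any node are mapped to a pair of conditions with no common
extension. -/
theorem stmt18 {B : Type*} [PartialOrder B] [Countable B] (D : B)
    (hfail : ¬ ∃ D' : B, D ≤ D' ∧ ∀ D₁ D₂ : B, D' ≤ D₁ → D' ≤ D₂ →
      ∃ E : B, D₁ ≤ E ∧ D₂ ≤ E) :
    ∃ φ : List Bool → B, φ [] = D ∧
      (∀ s t : List Bool, s <+: t → φ s ≤ φ t) ∧
      ∀ s : List Bool, ¬ ∃ E : B, φ (s ++ [false]) ≤ E ∧ φ (s ++ [true]) ≤ E := by
  classical
  push_neg at hfail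
  have h : ∀ x : {y : B // D ≤ y}, ∃ p : {y : B // D ≤ y} × {y : B // D ≤ y},
      x.1 ≤ p.1.1 ∧ x.1 ≤ p.2.1 ∧ ¬∃ E, p.1.1 ≤ E ∧ p.2.1 ≤ E := by
    rintro ⟨x, hx⟩
    obtain ⟨D₁, D₂, h1, h2, h3⟩ := hfail x hx
    exact ⟨⟨⟨D₁, hx.trans h1⟩, ⟨D₂, hx.trans h2⟩⟩, h1, h2, by
      rintro ⟨E, hE1, hE2⟩; exact h3 E hE1 hE2⟩
  choose g hg1 hg2 hg3 using h
  set f : {y : B // D ≤ y} → Bool → {y : B // D ≤ y} :=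
    fun x b => if b then (g x).2 else (g x).1 with hf
  have hstep : ∀ x b, x ≤ f x b := by
    intro x b; cases b
    · exact hg1 x
    · exact hg2 x
  set ψ : List Bool → {y : B // D ≤ y} :=
    fun s => s.foldl f ⟨D, le_refl D⟩ with hψ
  have hconcat : ∀ s b, ψ (s ++ [b]) = f (ψ s) b := by
    intro s b; simp [hψ]
  have hmono : ∀ u s, ψ s ≤ ψ (s ++ u) := by
    intro u
    induction u with
    | nil => intro s; simp
    | cons b u ih =>
        intro s
        have : s ++ b :: u = (s ++ [b]) ++ u := by simp
        rw [this]
        exact le_trans (by rw [hconcat]; exact hstep _ _) (ih (s ++ [b]))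
  refine ⟨fun s => (ψ s).1, rfl, ?_, ?_⟩
  · rintro s t ⟨u, rfl⟩
    exact hmono u s
  · intro s
    simp only [hconcat, hf, if_pos, if_neg, Bool.false_eq_true, not_false_iff, ite_true, ite_false]
    exact hg3 (ψ s)
end
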